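/- Let 𝒞 and 𝒞' be Grothendieck abelian categories, let π : 𝒞 → 𝒬 and π' : 𝒞' → 𝒬' be Gabriel localizations with fully faithful right adjoints ω and ω', and let F : 𝒞' → 𝒞 be an exact, fully faithful functor such that π(F(x)) ≅ 0 for every object x of 𝒞' with π'(x) ≅ 0. Assume 𝒞 has enough projectives and that F has a left adjoint E : 𝒞 → 𝒞' (E is additive and right exact, being a left adjoint) satisfying: π'(E(s)) ≅ 0 for every object s of 𝒞 with π(s) ≅ 0, and the first left derived functor L₁(π'∘E) satisfies L₁(π'∘E)(s) ≅ 0 for every object s with π(s) ≅ 0. Then the functor i^* := π'∘E∘ω : 𝒬 → 𝒬' is left adjoint to i_* := π∘F∘ω' : 𝒬' → 𝒬. -/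

import Mathlib

/-!
Put `G := E ⋙ π'`, left adjoint to `R := ω' ⋙ F`. Since `ω` is fully faithful, the adjunction
`G ⊣ R` restricts to `ω ⋙ G ⊣ R ⋙ π` as soon as the unit `η : A ⟶ ω (π A)` of `π ⊣ ω` is
invertible at every `A = R Y`.

The kernel and cokernel of `η` are killed by `π`, and `Hom(s, R Y) = Hom(G s, Y) = 0` whenever
`π s = 0`; hence `η` is mono. Since `G` and `L₁G` vanish on `T := coker η`, `G η` is invertible:
lifting the augmentation `P₀ ⟶ T` of a projective resolution to `B` exhibits `η` as a pushout of
`ker (P₀ ⟶ T) ⟶ P₀`, which the right exact `G` keeps mono because `L₁G(T) = 0`. Transporting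
`(G η)⁻¹` along `G ⊣ R` gives a retraction of `η`, so `T` is a direct summand of `ω (π A)`; but `T`
admits no nonzero map to `ω (π A)`, so `T = 0`.
-/

open CategoryTheory CategoryTheory.Limits

universe v u

namespace CategoryTheory

section Preadditive

variable {C : Type*} [Category C] [Preadditive C]

theorem isIso_of_isSplitMono_of_subsingleton {A B : C} (η : A ⟶ B) [HasCokernel η]
    [IsSplitMono η] [Subsingleton (cokernel η ⟶ B)] : IsIso η := by
  have hη : η ≫ (𝟙 B - retraction η ≫ η) = 0 := by simp
  have : 𝟙 B - retraction η ≫ η = 0 := by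
    rw [← cokernel.π_desc η _ hη, Subsingleton.elim (cokernel.desc η _ hη) 0, comp_zero]
  exact ⟨retraction η, IsSplitMono.id η, (sub_eq_zero.1 this).symm⟩

end Preadditive

variable {C D : Type*} [Category C] [Category D] [Abelian C] [Abelian D]

theorem isPushout_kernel_ι_of_comp_cokernel_π {A B P : C} (η : A ⟶ B) [Mono η]
    (ε : P ⟶ cokernel η) [Epi ε] (f : P ⟶ B) (hf : f ≫ cokernel.π η = ε) (g : kernel ε ⟶ A)
    (w : g ≫ η = kernel.ι ε ≫ f) : IsPushout g (kernel.ι ε) η f := by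
  have hExact : (CommSq.shortComplex ⟨w⟩).Exact := by
    rw [ShortComplex.exact_iff_exact_up_to_refinements]
    intro Z (x : Z ⟶ A ⊞ P) (hx : x ≫ biprod.desc η f = 0)
    have hx' : (x ≫ biprod.fst) ≫ η + (x ≫ biprod.snd) ≫ f = 0 := by
      simpa [biprod.desc_eq] using hx
    have hxε : (x ≫ biprod.snd) ≫ ε = 0 := by
      rw [← hf, ← Category.assoc, ← neg_eq_of_add_eq_zero_right hx', Preadditive.neg_comp,
        Category.assoc, cokernel.condition, comp_zero, neg_zero]
    refine ⟨Z, 𝟙 Z, inferInstance, -kernel.lift ε _ hxε, ?_⟩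
    change 𝟙 Z ≫ x = _ ≫ biprod.lift g (-kernel.ι ε)
    apply biprod.hom_ext
    · rw [← cancel_mono η]
      simp [w, ← neg_eq_of_add_eq_zero_left hx']
    · simp
  have hEpi : Epi (CommSq.shortComplex ⟨w⟩).g := by
    rw [epi_iff_surjective_up_to_refinements]
    intro Z (b : Z ⟶ B)
    obtain ⟨Z', π, _, p, hp⟩ := surjective_up_to_refinements_of_epi ε (b ≫ cokernel.π η)
    have hb : (π ≫ b - p ≫ f) ≫ cokernel.π η = 0 := by
      rw [Preadditive.sub_comp, Category.assoc, hp, Category.assoc, hf, sub_self]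
    refine ⟨Z', π, inferInstance, biprod.lift (Abelian.monoLift η _ hb) p, ?_⟩
    change π ≫ b = _ ≫ biprod.desc η f
    rw [biprod.lift_desc, Abelian.monoLift_comp, sub_add_cancel]
  exact ⟨⟨w⟩, ⟨(CommSq.isColimitEquivIsColimitCokernelCofork ⟨w⟩).symm hExact.gIsCokernel⟩⟩

theorem ShortComplex.Exact.mono_of_epi_fac {S : ShortComplex C} (hS : S.Exact) {K : C}
    (q : S.X₂ ⟶ K) [Epi q] (i : K ⟶ S.X₃) (hqi : q ≫ i = S.g) (hfq : S.f ≫ q = 0) :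
    Mono i := by
  rw [Preadditive.mono_iff_cancel_zero]
  intro Z k hk
  obtain ⟨Z₁, π₁, _, y, hy⟩ := surjective_up_to_refinements_of_epi q k
  obtain ⟨Z₂, π₂, _, z, hz⟩ := hS.exact_up_to_refinements y (by
    rw [← hqi, ← Category.assoc, ← hy, Category.assoc, hk, comp_zero])
  have : (π₂ ≫ π₁) ≫ k = 0 := by
    rw [Category.assoc, hy, ← Category.assoc, hz, Category.assoc, hfq, comp_zero]
  exact zero_of_epi_comp _ this

theorem ProjectiveResolution.mono_map_kernel_ι_of_isZero_leftDerived_one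
    [HasProjectiveResolutions C] (G : C ⥤ D) [G.Additive] [PreservesFiniteColimits G] {T : C}
    (R : ProjectiveResolution T) (h : IsZero ((G.leftDerived 1).obj T)) :
    Mono (G.map (kernel.ι (R.π.f 0))) := by
  let q := kernel.lift (R.π.f 0) (R.complex.d 1 0) R.complex_d_comp_π_f_zero
  have : Epi q := R.exact₀.epi_kernelLift
  have hS : (((G.mapHomologicalComplex _).obj R.complex).sc' 2 1 0).Exact := by
    rw [← HomologicalComplex.exactAt_iff' _ 2 1 0 (by simp) (by simp),
      HomologicalComplex.exactAt_iff_isZero_homology]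
    exact h.of_iso (R.isoLeftDerivedObj G 1).symm
  refine @ShortComplex.Exact.mono_of_epi_fac _ _ _ _ hS _ (G.map q)
    (preserves_epi_of_preservesColimit G q) _ ?_ ?_
  · exact (G.map_comp _ _).symm.trans (congrArg G.map (kernel.lift_ι _ _ _))
  · have : R.complex.d 2 1 ≫ q = 0 := by
      rw [← cancel_mono (kernel.ι _), Category.assoc, kernel.lift_ι, zero_comp,
        R.complex.d_comp_d]
    exact (G.map_comp _ _).symm.trans ((congrArg G.map this).trans (G.map_zero _ _))

theorem Functor.isIso_map_of_isZero_obj_cokernel [HasProjectiveResolutions C] (G : C ⥤ D)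
    [G.Additive] [PreservesFiniteColimits G] {A B : C} (η : A ⟶ B) [Mono η]
    (h₀ : IsZero (G.obj (cokernel η))) (h₁ : IsZero ((G.leftDerived 1).obj (cokernel η))) :
    IsIso (G.map η) := by
  let R := projectiveResolution (cokernel η)
  let ε : R.complex.X 0 ⟶ cokernel η := R.π.f 0
  have : Epi ε := inferInstanceAs (Epi (R.π.f 0))
  let f := Projective.factorThru ε (cokernel.π η)
  have hf : f ≫ cokernel.π η = ε := Projective.factorThru_comp _ _
  have hg : (kernel.ι ε ≫ f) ≫ cokernel.π η = 0 := by
    rw [Category.assoc, hf, kernel.condition]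
  have sq := isPushout_kernel_ι_of_comp_cokernel_π η ε f hf (Abelian.monoLift η _ hg)
    (Abelian.monoLift_comp _ _ _)
  have : Mono (G.map (kernel.ι ε)) := R.mono_map_kernel_ι_of_isZero_leftDerived_one G h₁
  have : Mono (G.map η) :=
    (MorphismProperty.monomorphisms D).of_isPushout (G.map_isPushout sq) this
  have : Epi (G.map η) :=
    Preadditive.epi_of_isZero_cokernel _ (h₀.of_iso (PreservesCokernel.iso G η).symm)
  exact isIso_of_mono_of_epi _

theorem Functor.isZero_obj_kernel_of_isIso_map (F : C ⥤ D) [PreservesFiniteLimits F]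
    {X Y : C} (f : X ⟶ Y) [IsIso (F.map f)] : IsZero (F.obj (Limits.kernel f)) :=
  (isZero_kernel_of_mono (F.map f)).of_iso (PreservesKernel.iso F f)

theorem Functor.isZero_obj_cokernel_of_isIso_map (F : C ⥤ D) [PreservesFiniteColimits F]
    {X Y : C} (f : X ⟶ Y) [IsIso (F.map f)] : IsZero (F.obj (cokernel f)) :=
  (isZero_cokernel_of_epi (F.map f)).of_iso (PreservesCokernel.iso F f)

end CategoryTheory

namespace CategoryTheory.Adjunction

section

variable {C D : Type*} [Category C] [Category D] {L : C ⥤ D} {R : D ⥤ C}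

theorem subsingleton_hom_of_isZero (adj : L ⊣ R) {X : C} (hX : IsZero (L.obj X)) (Y : D) :
    Subsingleton (X ⟶ R.obj Y) :=
  have : Subsingleton (L.obj X ⟶ Y) := ⟨hX.eq_of_src⟩
  (adj.homEquiv X Y).symm.subsingleton

theorem isSplitMono_of_isIso_map (adj : L ⊣ R) {Y : D} {B : C} (η : R.obj Y ⟶ B)
    [IsIso (L.map η)] : IsSplitMono η :=
  IsSplitMono.mk' ⟨adj.homEquiv _ _ (inv (L.map η) ≫ adj.counit.app Y), by
    rw [← adj.homEquiv_naturality_left, IsIso.hom_inv_id_assoc]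
    simp [homEquiv_unit]⟩

end

variable {C Q D : Type*} [Category C] [Category Q] [Category D] [Abelian C] [Abelian Q] [Abelian D]

theorem isIso_unit_app_obj_of_isZero_leftDerived_one {π : C ⥤ Q} {ω : Q ⥤ C} (adj : π ⊣ ω)
    [ω.Full] [ω.Faithful] [PreservesFiniteLimits π] [HasProjectiveResolutions C]
    {G : C ⥤ D} {R : D ⥤ C} [G.Additive] (adjG : G ⊣ R)
    (h₀ : ∀ s, IsZero (π.obj s) → IsZero (G.obj s))
    (h₁ : ∀ s, IsZero (π.obj s) → IsZero ((G.leftDerived 1).obj s)) (Y : D) :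
    IsIso (adj.unit.app (R.obj Y)) := by
  have := adj.isLeftAdjoint
  have := adjG.isLeftAdjoint
  let η : R.obj Y ⟶ ω.obj (π.obj (R.obj Y)) := adj.unit.app (R.obj Y)
  have hK := π.isZero_obj_kernel_of_isIso_map η
  have hT := π.isZero_obj_cokernel_of_isIso_map η
  have := adjG.subsingleton_hom_of_isZero (h₀ _ hK) Y
  have : Mono η := Abelian.mono_of_kernel_ι_eq_zero _ (Subsingleton.elim _ _)
  have : IsIso (G.map η) := G.isIso_map_of_isZero_obj_cokernel η (h₀ _ hT) (h₁ _ hT)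
  have := adjG.isSplitMono_of_isIso_map η
  have := adj.subsingleton_hom_of_isZero hT (π.obj (R.obj Y))
  exact isIso_of_isSplitMono_of_subsingleton η

end CategoryTheory.Adjunction

theorem stmt14_general
    -- 𝒞 is a Grothendieck abelian category
    (C : Type u) [Category.{v} C] [Abelian C]
    -- 𝒬 is a Grothendieck abelian category
    (Q : Type u) [Category.{v} Q] [Abelian Q]
    -- 𝒞' is a Grothendieck abelian category
    (C' : Type u) [Category.{v} C'] [Abelian C']
    -- 𝒬' is a Grothendieck abelian category
    (Q' : Type u) [Category.{v} Q'] [Abelian Q']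
    -- π : 𝒞 ⥤ 𝒬 is a Gabriel localization: exact with fully faithful right adjoint ω
    (π : C ⥤ Q) [PreservesFiniteLimits π]
    (ω : Q ⥤ C) [ω.Full] [ω.Faithful] (adj : π ⊣ ω)
    -- π' : 𝒞' ⥤ 𝒬' is a Gabriel localization: exact with fully faithful right adjoint ω'
    (π' : C' ⥤ Q') [π'.Additive]
    (ω' : Q' ⥤ C') (adj' : π' ⊣ ω')
    -- F : 𝒞' ⥤ 𝒞 is exact and fully faithful
    (F : C' ⥤ C)
    -- 𝒞 has enough projectives
    [EnoughProjectives C]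
    -- F has a left adjoint E; E is additive and right exact, being a left adjoint
    (E : C ⥤ C') [E.Additive] (adjEF : E ⊣ F)
    -- π' ∘ E vanishes on the kernel of π
    (hkerE : ∀ s : C, IsZero (π.obj s) → IsZero (π'.obj (E.obj s)))
    -- L₁(π' ∘ E) vanishes on the kernel of π
    (hL1 : ∀ s : C, IsZero (π.obj s) → IsZero (((E ⋙ π').leftDerived 1).obj s)) :
    Nonempty ((ω ⋙ E ⋙ π') ⊣ (ω' ⋙ F ⋙ π)) := by
  have := adj.isIso_unit_app_obj_of_isZero_leftDerived_one (adjEF.comp adj') hkerE hL1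
  exact ⟨(adjEF.comp adj').restrictFullyFaithful (.ofFullyFaithful ω) (.id _)
    (Functor.rightUnitor _).symm
    (NatIso.ofComponents (fun Y ↦ asIso (adj.unit.app ((ω' ⋙ F).obj Y)))
      (fun _ ↦ adj.unit.naturality _))⟩

/-- If `𝒞` has enough projectives and `F` has a left adjoint `E` such that
`π' ∘ E` and `L₁(π' ∘ E)` vanish on the kernel of `π`, then `i^* := π' ∘ E ∘ ω` is left
adjoint to `i_* := π ∘ F ∘ ω'`. -/
theorem stmt14
    -- 𝒞 is a Grothendieck abelian category
    (C : Type u) [Category.{v} C] [Abelian C] [HasColimits C] [AB5 C] [HasSeparator C]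
    -- 𝒬 is a Grothendieck abelian category
    (Q : Type u) [Category.{v} Q] [Abelian Q] [HasColimits Q] [AB5 Q] [HasSeparator Q]
    -- 𝒞' is a Grothendieck abelian category
    (C' : Type u) [Category.{v} C'] [Abelian C'] [HasColimits C'] [AB5 C'] [HasSeparator C']
    -- 𝒬' is a Grothendieck abelian category
    (Q' : Type u) [Category.{v} Q'] [Abelian Q'] [HasColimits Q'] [AB5 Q'] [HasSeparator Q']
    -- π : 𝒞 ⥤ 𝒬 is a Gabriel localization: exact with fully faithful right adjoint ω
    (π : C ⥤ Q) [π.Additive] [PreservesFiniteLimits π] [PreservesFiniteColimits π]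
    (ω : Q ⥤ C) [ω.Full] [ω.Faithful] (adj : π ⊣ ω)
    -- π' : 𝒞' ⥤ 𝒬' is a Gabriel localization: exact with fully faithful right adjoint ω'
    (π' : C' ⥤ Q') [π'.Additive] [PreservesFiniteLimits π'] [PreservesFiniteColimits π']
    (ω' : Q' ⥤ C') [ω'.Full] [ω'.Faithful] (adj' : π' ⊣ ω')
    -- F : 𝒞' ⥤ 𝒞 is exact and fully faithful
    (F : C' ⥤ C) [F.Additive] [PreservesFiniteLimits F] [PreservesFiniteColimits F]
    [F.Full] [F.Faithful]
    -- π ∘ F vanishes on the kernel of π'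
    (hker : ∀ x : C', IsZero (π'.obj x) → IsZero (π.obj (F.obj x)))
    -- 𝒞 has enough projectives
    [EnoughProjectives C]
    -- F has a left adjoint E; E is additive and right exact, being a left adjoint
    (E : C ⥤ C') [E.Additive] [PreservesFiniteColimits E] (adjEF : E ⊣ F)
    -- π' ∘ E vanishes on the kernel of π
    (hkerE : ∀ s : C, IsZero (π.obj s) → IsZero (π'.obj (E.obj s)))
    -- L₁(π' ∘ E) vanishes on the kernel of π
    (hL1 : ∀ s : C, IsZero (π.obj s) → IsZero (((E ⋙ π').leftDerived 1).obj s)) :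
    Nonempty ((ω ⋙ E ⋙ π') ⊣ (ω' ⋙ F ⋙ π)) :=
  stmt14_general C Q C' Q' π ω adj π' ω' adj' F E adjEF hkerE hL1
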